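/- Let s ≥ t ≥ 0 be real numbers. Then the system of equations sinh²(β) + sinh²(γ) = sinh²(2s) + sinh²(s) and sinh(β)·sinh(γ) = sinh(2t)·sinh(t) has a unique solution (β, γ) ∈ ℝ² satisfying β ≥ γ ≥ 0. -/

import Mathlib

/-!
Since `sinh` is an order-preserving bijection of `ℝ` fixing `0`, substituting `x = sinh β`,
`y = sinh γ` turns the system into `x ^ 2 + y ^ 2 = A`, `x * y = P` with `0 ≤ y ≤ x`, which has
exactly one solution as soon as `0 ≤ P` and `2 * P ≤ A`. For `0 ≤ t ≤ s` these bounds follow from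
monotonicity of `sinh` and `2 * a * b ≤ a ^ 2 + b ^ 2`.
-/

open Real

/-- Writing `u = x + y` and `v = x - y`, the system reads `u ^ 2 = A + 2 * P`, `v ^ 2 = A - 2 * P`
with `0 ≤ v ≤ u`, which determines `u` and `v` as square roots. -/
theorem existsUnique_sq_add_sq_eq_and_mul_eq {A P : ℝ} (hP : 0 ≤ P) (hPA : 2 * P ≤ A) :
    ∃! p : ℝ × ℝ, (p.2 ≤ p.1 ∧ 0 ≤ p.2) ∧ p.1 ^ 2 + p.2 ^ 2 = A ∧ p.1 * p.2 = P := by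
  set u := √(A + 2 * P) with hu
  set v := √(A - 2 * P) with hv
  have hu2 : u ^ 2 = A + 2 * P := sq_sqrt (by linarith)
  have hv2 : v ^ 2 = A - 2 * P := sq_sqrt (by linarith)
  have hvu : v ≤ u := sqrt_le_sqrt (by linarith)
  refine ⟨((u + v) / 2, (u - v) / 2), ⟨⟨?_, ?_⟩, ?_, ?_⟩, ?_⟩
  · linarith [sqrt_nonneg (A - 2 * P)]
  · linarith
  · linear_combination (hu2 + hv2) / 2
  · linear_combination (hu2 - hv2) / 4
  rintro ⟨x, y⟩ ⟨⟨hyx, hy⟩, hA, hxy⟩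
  have hsum : x + y = u := by
    rw [hu, ← hA, ← hxy, ← sqrt_sq (by linarith : 0 ≤ x + y)]
    congr 1; ring
  have hdiff : x - y = v := by
    rw [hv, ← hA, ← hxy, ← sqrt_sq (by linarith : 0 ≤ x - y)]
    congr 1; ring
  exact Prod.ext (by simp only; linarith) (by simp only; linarith)

theorem unique_beta_gamma_solution (s t : ℝ) (hts : t ≤ s) (ht : 0 ≤ t) :
    ∃! p : ℝ × ℝ, (p.2 ≤ p.1 ∧ 0 ≤ p.2) ∧
      sinh p.1 ^ 2 + sinh p.2 ^ 2 = sinh (2 * s) ^ 2 + sinh s ^ 2 ∧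
      sinh p.1 * sinh p.2 = sinh (2 * t) * sinh t := by
  have hsinh_t : 0 ≤ sinh t := sinh_nonneg_iff.mpr ht
  have hsinh_2t : 0 ≤ sinh (2 * t) := sinh_nonneg_iff.mpr (by linarith)
  have hPA : 2 * (sinh (2 * t) * sinh t) ≤ sinh (2 * s) ^ 2 + sinh s ^ 2 :=
    calc 2 * (sinh (2 * t) * sinh t) ≤ 2 * (sinh (2 * s) * sinh s) := by
          gcongr 2 * ?_
          exact mul_le_mul (sinh_le_sinh.mpr (by linarith)) (sinh_le_sinh.mpr hts) hsinh_t
            (sinh_nonneg_iff.mpr (by linarith))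
      _ ≤ sinh (2 * s) ^ 2 + sinh s ^ 2 := by
          linarith [two_mul_le_add_sq (sinh (2 * s)) (sinh s)]
  have key := existsUnique_sq_add_sq_eq_and_mul_eq (mul_nonneg hsinh_2t hsinh_t) hPA
  rw [(sinh_bijective.prodMap sinh_bijective).existsUnique_iff] at key
  simpa only [Prod.map_fst, Prod.map_snd, sinh_le_sinh, sinh_nonneg_iff] using key
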